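/- arXiv:1608.01726 — 3 statements merged into one kernel-verified Lean document; each statement's English description precedes it below -/
import Mathlib

section
/- Pointwise form of the variational inequality: under the hypotheses of the previous statement (ū ∈ U_ad satisfying (p̄ + α(ū − ū_d), v − ū) ≥ 0 for all v ∈ U_ad with U_ad = {a ≤ v ≤ b a.e.}), for a.e. x ∈ Ω one has [p̄(x) + α(ū(x) − ū_d(x))]·[s − ū(x)] ≥ 0 for every s ∈ [a,b]. -/
/-!
Testing the variational inequality with `v = c` on a measurable set `s` and `v = ū` off `s`
shows that `∫ₛ g (c - ū) ≥ 0` for every `s`, where `g = p̄ + α(ū - ū_d)`; hence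
`g (c - ū) ≥ 0` a.e. for each constant `c ∈ [a, b]`. Taking `c = a` and `c = b` suffices,
since `s ↦ g(x) (s - ū(x))` is affine and so nonnegative on `[a, b]` once it is at the endpoints.
-/

open MeasureTheory

section VariationalInequality

variable {X : Type*} [MeasurableSpace X] {μ : Measure X} [IsFiniteMeasure μ]
  {a b c : ℝ} {g u : X → ℝ}

theorem setIntegral_mul_sub_nonneg_of_variationalInequality (hc : c ∈ Set.Icc a b)
    (hu : MemLp u 2 μ) (huad : ∀ᵐ x ∂μ, a ≤ u x ∧ u x ≤ b)
    (hVI : ∀ v : X → ℝ, MemLp v 2 μ → (∀ᵐ x ∂μ, a ≤ v x ∧ v x ≤ b) →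
      0 ≤ ∫ x, g x * (v x - u x) ∂μ)
    {s : Set X} (hs : MeasurableSet s) :
    0 ≤ ∫ x in s, g x * (c - u x) ∂μ := by
  classical
  set v : X → ℝ := s.piecewise (fun _ => c) u
  have hv : MemLp v 2 μ := MemLp.piecewise hs (memLp_const c) (hu.restrict sᶜ)
  have hvad : ∀ᵐ x ∂μ, a ≤ v x ∧ v x ≤ b := by
    filter_upwards [huad] with x hx
    by_cases hxs : x ∈ s
    · simpa [v, hxs] using hc
    · simpa [v, hxs] using hx
  have hintegrand : (fun x => g x * (v x - u x)) = s.indicator fun x => g x * (c - u x) := by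
    ext x
    by_cases hxs : x ∈ s <;> simp [v, hxs]
  rw [← integral_indicator hs, ← hintegrand]
  exact hVI v hv hvad

theorem ae_mul_sub_nonneg_of_variationalInequality (hc : c ∈ Set.Icc a b)
    (hg : MemLp g 2 μ) (hu : MemLp u 2 μ) (huad : ∀ᵐ x ∂μ, a ≤ u x ∧ u x ≤ b)
    (hVI : ∀ v : X → ℝ, MemLp v 2 μ → (∀ᵐ x ∂μ, a ≤ v x ∧ v x ≤ b) →
      0 ≤ ∫ x, g x * (v x - u x) ∂μ) :
    ∀ᵐ x ∂μ, 0 ≤ g x * (c - u x) := by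
  have hint : Integrable (fun x => g x * (c - u x)) μ :=
    hg.integrable_mul (q := 2) ((memLp_const c).sub hu)
  exact ae_nonneg_of_forall_setIntegral_nonneg hint fun s hs _ =>
    setIntegral_mul_sub_nonneg_of_variationalInequality hc hu huad hVI hs

end VariationalInequality

theorem mul_sub_nonneg_of_mem_Icc {a b g t s : ℝ} (ha : 0 ≤ g * (a - t)) (hb : 0 ≤ g * (b - t))
    (hs : s ∈ Set.Icc a b) : 0 ≤ g * (s - t) := by
  rcases le_total 0 g with hg | hg
  · exact ha.trans (mul_le_mul_of_nonneg_left (by linarith [hs.1]) hg)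
  · exact hb.trans (mul_le_mul_of_nonpos_left (by linarith [hs.2]) hg)

theorem control_pointwise_variational_inequality_general (n : ℕ)
    (Ω : Set (EuclideanSpace ℝ (Fin n)))
    (hΩb : Bornology.IsBounded Ω)
    (a b α : ℝ) (hab : a ≤ b)
    (p ud u : EuclideanSpace ℝ (Fin n) → ℝ)
    (hp : MemLp p 2 (volume.restrict Ω)) (hud : MemLp ud 2 (volume.restrict Ω))
    (hu : MemLp u 2 (volume.restrict Ω))
    (huad : ∀ᵐ x ∂(volume.restrict Ω), a ≤ u x ∧ u x ≤ b)
    (hVI : ∀ v : EuclideanSpace ℝ (Fin n) → ℝ, MemLp v 2 (volume.restrict Ω) →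
      (∀ᵐ x ∂(volume.restrict Ω), a ≤ v x ∧ v x ≤ b) →
      0 ≤ ∫ x, (p x + α * (u x - ud x)) * (v x - u x) ∂(volume.restrict Ω)) :
    ∀ᵐ x ∂(volume.restrict Ω), ∀ s ∈ Set.Icc a b,
      0 ≤ (p x + α * (u x - ud x)) * (s - u x) := by
  have : IsFiniteMeasure (volume.restrict Ω) :=
    isFiniteMeasure_restrict.mpr hΩb.measure_lt_top.ne
  have hg : MemLp (fun x => p x + α * (u x - ud x)) 2 (volume.restrict Ω) :=
    hp.add ((hu.sub hud).const_mul α)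
  have ha := ae_mul_sub_nonneg_of_variationalInequality ⟨le_rfl, hab⟩ hg hu huad hVI
  have hb := ae_mul_sub_nonneg_of_variationalInequality ⟨hab, le_rfl⟩ hg hu huad hVI
  filter_upwards [ha, hb] with x hxa hxb s hs
  exact mul_sub_nonneg_of_mem_Icc hxa hxb hs

/-- Pointwise form of the variational inequality: if `ū ∈ U_ad` satisfies
`(p̄ + α(ū − ū_d), v − ū) ≥ 0` for all `v ∈ U_ad = {a ≤ v ≤ b a.e.}`, then for a.e. `x`
one has `(p̄(x) + α(ū(x) − ū_d(x)))(s − ū(x)) ≥ 0` for every `s ∈ [a,b]`. -/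
theorem control_pointwise_variational_inequality (n : ℕ)
    (Ω : Set (EuclideanSpace ℝ (Fin n)))
    (hΩm : MeasurableSet Ω) (hΩb : Bornology.IsBounded Ω)
    (a b α : ℝ) (hab : a ≤ b) (hα : 0 < α)
    (p ud u : EuclideanSpace ℝ (Fin n) → ℝ)
    (hp : MemLp p 2 (volume.restrict Ω)) (hud : MemLp ud 2 (volume.restrict Ω))
    (hu : MemLp u 2 (volume.restrict Ω))
    (huad : ∀ᵐ x ∂(volume.restrict Ω), a ≤ u x ∧ u x ≤ b)
    (hVI : ∀ v : EuclideanSpace ℝ (Fin n) → ℝ, MemLp v 2 (volume.restrict Ω) →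
      (∀ᵐ x ∂(volume.restrict Ω), a ≤ v x ∧ v x ≤ b) →
      0 ≤ ∫ x, (p x + α * (u x - ud x)) * (v x - u x) ∂(volume.restrict Ω)) :
    ∀ᵐ x ∂(volume.restrict Ω), ∀ s ∈ Set.Icc a b,
      0 ≤ (p x + α * (u x - ud x)) * (s - u x) :=
  control_pointwise_variational_inequality_general n Ω hΩb a b α hab p ud u hp hud hu huad hVI
end

section
/- Sign property used in the superconvergence proof: with the hypotheses of the previous identity (a_D symmetric, the two discrete equations relating (ȳ_D − y_D(û)) and (p*_D(û) − p̄_D)), the quantity M₃ = (Π(p*_D(û) − p̄_D), ū_h − û) satisfies M₃ = −‖Π(ȳ_D − y_D(û))‖² ≤ 0. -/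
open MeasureTheory

/-! Both discrete equations, tested crosswise (the state equation with `p*_D(û) − p̄_D`, the adjoint
equation with `ȳ_D − y_D(û)`), evaluate the same number `a_D(ȳ_D − y_D(û), p*_D(û) − p̄_D)`. -/

theorem inner_map_eq_neg_norm_sq_of_crosswise_eq {X E : Type*} [AddCommGroup X] [Module ℝ X]
    [NormedAddCommGroup E] [InnerProductSpace ℝ E] (P : X →ₗ[ℝ] E) (a : X →ₗ[ℝ] X →ₗ[ℝ] ℝ)
    {e q : X} {f : E} (he : ∀ w, a e w = inner ℝ f (P w))
    (hq : ∀ w, a w q = inner ℝ (-P e) (P w)) :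
    inner ℝ (P q) f = -‖P e‖ ^ 2 := by
  calc inner ℝ (P q) f = a e q := by rw [he, real_inner_comm]
    _ = -‖P e‖ ^ 2 := by rw [hq, inner_neg_left, real_inner_self_eq_norm_sq]

theorem M3_sign_property_general (n : ℕ) (Ω : Set (EuclideanSpace ℝ (Fin n)))
    (X : Type*) [AddCommGroup X] [Module ℝ X]
    (PiD : X →ₗ[ℝ] Lp ℝ 2 (volume.restrict Ω))
    (aD : X →ₗ[ℝ] X →ₗ[ℝ] ℝ)
    (ubh uhat : Lp ℝ 2 (volume.restrict Ω))
    (ybD yuD psD pbD : X)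
    (h1 : ∀ w : X, aD (ybD - yuD) w = (inner ℝ (ubh - uhat) (PiD w) : ℝ))
    (h2 : ∀ w : X, aD w (psD - pbD) = (inner ℝ (PiD yuD - PiD ybD) (PiD w) : ℝ)) :
    (inner ℝ (PiD psD - PiD pbD) (ubh - uhat) : ℝ) = -‖PiD (ybD - yuD)‖ ^ 2 ∧
    (inner ℝ (PiD psD - PiD pbD) (ubh - uhat) : ℝ) ≤ 0 := by
  have hM3 : (inner ℝ (PiD psD - PiD pbD) (ubh - uhat) : ℝ) = -‖PiD (ybD - yuD)‖ ^ 2 := by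
    rw [← map_sub]
    refine inner_map_eq_neg_norm_sq_of_crosswise_eq PiD aD h1 fun w => ?_
    rw [h2, map_sub, neg_sub]
  exact ⟨hM3, hM3 ▸ neg_nonpos.mpr (sq_nonneg _)⟩

/-- Sign property used in the superconvergence proof:
`M₃ = (Π(p*_D(û) − p̄_D), ū_h − û) = −‖Π(ȳ_D − y_D(û))‖² ≤ 0`. -/
theorem M3_sign_property (n : ℕ) (Ω : Set (EuclideanSpace ℝ (Fin n)))
    (hΩm : MeasurableSet Ω) (hΩb : Bornology.IsBounded Ω)
    (X : Type*) [AddCommGroup X] [Module ℝ X] [FiniteDimensional ℝ X]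
    (PiD : X →ₗ[ℝ] Lp ℝ 2 (volume.restrict Ω))
    (aD : X →ₗ[ℝ] X →ₗ[ℝ] ℝ) (hsym : ∀ v w : X, aD v w = aD w v)
    (ubh uhat : Lp ℝ 2 (volume.restrict Ω))
    (ybD yuD psD pbD : X)
    (h1 : ∀ w : X, aD (ybD - yuD) w = (inner ℝ (ubh - uhat) (PiD w) : ℝ))
    (h2 : ∀ w : X, aD w (psD - pbD) = (inner ℝ (PiD yuD - PiD ybD) (PiD w) : ℝ)) :
    (inner ℝ (PiD psD - PiD pbD) (ubh - uhat) : ℝ) = -‖PiD (ybD - yuD)‖ ^ 2 ∧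
    (inner ℝ (PiD psD - PiD pbD) (ubh - uhat) : ℝ) ≤ 0 :=
  M3_sign_property_general n Ω X PiD aD ubh uhat ybD yuD psD pbD h1 h2
end

section
/- Basic control error estimate (abstract version): let H be a real Hilbert space, U_ad ⊂ H nonempty closed convex, U_h ⊂ H a closed subspace with orthogonal projection Pr_h satisfying Pr_h(U_ad) ⊂ U_ad ∩ U_h, and α > 0. Suppose ū ∈ U_ad and ū_h ∈ U_ad ∩ U_h satisfy (P̄ + α(ū − u_d), v − ū) ≥ 0 for all v ∈ U_ad and (P̄_h + α(ū_h − u_d), v_h − ū_h) ≥ 0 for all v_h ∈ U_ad ∩ U_h, for some P̄, P̄_h ∈ H, u_d ∈ H. Then α‖ū − ū_h‖² ≤ (P̄_h − P̄, ū − ū_h) − (P̄_h + α(ū_h − u_d), ū − Pr_h ū). -/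
open scoped RealInnerProductSpace

section VariationalInequality

variable {E : Type*} [NormedAddCommGroup E] [InnerProductSpace ℝ E]

/-- The sum of the two optimality conditions, that of `u` tested with `uh` and that of `uh`
tested with `w = Pr_h u`. -/
theorem inner_sub_le_inner_sub_of_variational (a b u uh w : E)
    (h₁ : 0 ≤ ⟪a, uh - u⟫) (h₂ : 0 ≤ ⟪b, w - uh⟫) :
    ⟪b, u - w⟫ ≤ ⟪b - a, u - uh⟫ := by
  have split : ⟪b - a, u - uh⟫ = ⟪b, u - w⟫ + ⟪b, w - uh⟫ + ⟪a, uh - u⟫ := by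
    simp only [inner_sub_left, inner_sub_right]
    ring
  linarith

theorem inner_gradient_sub_gradient (α : ℝ) (P Ph ud u uh : E) :
    ⟪(Ph + α • (uh - ud)) - (P + α • (u - ud)), u - uh⟫
      = ⟪Ph - P, u - uh⟫ - α * ‖u - uh‖ ^ 2 := by
  have hdiff : (Ph + α • (uh - ud)) - (P + α • (u - ud)) = (Ph - P) - α • (u - uh) := by
    simp only [smul_sub]
    abel
  rw [hdiff, inner_sub_left, real_inner_smul_left, real_inner_self_eq_norm_sq]

end VariationalInequality

theorem abstract_control_error_estimate_general (H : Type*) [NormedAddCommGroup H]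
    [InnerProductSpace ℝ H]
    (Uad : Set H)
    (K : Submodule ℝ H) [K.HasOrthogonalProjection]
    (hproj : ∀ v ∈ Uad, (↑(K.orthogonalProjectionOnto v) : H) ∈ Uad ∩ (K : Set H))
    (α : ℝ)
    (ubar ubarh : H) (hubar : ubar ∈ Uad) (hubarh : ubarh ∈ Uad ∩ (K : Set H))
    (P Ph udd : H)
    (hVI1 : ∀ v ∈ Uad, 0 ≤ (inner ℝ (P + α • (ubar - udd)) (v - ubar) : ℝ))
    (hVI2 : ∀ vh ∈ Uad ∩ (K : Set H),
      0 ≤ (inner ℝ (Ph + α • (ubarh - udd)) (vh - ubarh) : ℝ)) :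
    α * ‖ubar - ubarh‖ ^ 2
      ≤ (inner ℝ (Ph - P) (ubar - ubarh) : ℝ)
        - (inner ℝ (Ph + α • (ubarh - udd))
            (ubar - ↑(K.orthogonalProjectionOnto ubar)) : ℝ) := by
  have key := inner_sub_le_inner_sub_of_variational _ _ ubar ubarh _
    (hVI1 ubarh hubarh.1) (hVI2 _ (hproj ubar hubar))
  rw [inner_gradient_sub_gradient] at key
  linarith

/-- Basic control error estimate (abstract Hilbert space version):
`α‖ū − ū_h‖² ≤ (P̄_h − P̄, ū − ū_h) − (P̄_h + α(ū_h − u_d), ū − Pr_h ū)`. -/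
theorem abstract_control_error_estimate (H : Type*) [NormedAddCommGroup H]
    [InnerProductSpace ℝ H] [CompleteSpace H]
    (Uad : Set H) (hne : Uad.Nonempty) (hcl : IsClosed Uad) (hconv : Convex ℝ Uad)
    (K : Submodule ℝ H) [K.HasOrthogonalProjection]
    (hproj : ∀ v ∈ Uad, (↑(K.orthogonalProjectionOnto v) : H) ∈ Uad ∩ (K : Set H))
    (α : ℝ) (hα : 0 < α)
    (ubar ubarh : H) (hubar : ubar ∈ Uad) (hubarh : ubarh ∈ Uad ∩ (K : Set H))
    (P Ph udd : H)
    (hVI1 : ∀ v ∈ Uad, 0 ≤ (inner ℝ (P + α • (ubar - udd)) (v - ubar) : ℝ))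
    (hVI2 : ∀ vh ∈ Uad ∩ (K : Set H),
      0 ≤ (inner ℝ (Ph + α • (ubarh - udd)) (vh - ubarh) : ℝ)) :
    α * ‖ubar - ubarh‖ ^ 2
      ≤ (inner ℝ (Ph - P) (ubar - ubarh) : ℝ)
        - (inner ℝ (Ph + α • (ubarh - udd))
            (ubar - ↑(K.orthogonalProjectionOnto ubar)) : ℝ) :=
  abstract_control_error_estimate_general H Uad K hproj α ubar ubarh hubar hubarh P Ph udd hVI1 hVI2
end
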